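/- Let A be a unital algebra and let L be a two-sided ideal of A of finite codimension such that A/L is semisimple. Suppose each maximal left ideal of A containing L is finitely generated as a left ideal of A. Then L is finitely generated as a left ideal of A. -/

import Mathlib

noncomputable section

/-- A left ideal of an algebra `A`, encoded as a `ℂ`-submodule closed under
left multiplication by arbitrary elements of `A`. -/
def IsLeftIdeal {A : Type*} [NonUnitalNonAssocSemiring A] [Module ℂ A]
    (I : Submodule ℂ A) : Prop :=
  ∀ a : A, ∀ x ∈ I, a * x ∈ I

/-- The left ideal generated by a set `S` (equivalently `⟨S⟩ = A♯·S`). -/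
def leftIdealGen {A : Type*} [NonUnitalNonAssocSemiring A] [Module ℂ A]
    (S : Set A) : Submodule ℂ A :=
  sInf {I : Submodule ℂ A | IsLeftIdeal I ∧ S ⊆ ↑I}

/-- A left ideal is finitely generated if it is generated by a finite subset of itself. -/
def IsFGLeftIdeal {A : Type*} [NonUnitalNonAssocSemiring A] [Module ℂ A]
    (I : Submodule ℂ A) : Prop :=
  ∃ S : Finset A, ↑S ⊆ (I : Set A) ∧ leftIdealGen (↑S : Set A) = I

/-- A left ideal is countably generated if it is generated by a countable subset of itself. -/
def IsCGLeftIdeal {A : Type*} [NonUnitalNonAssocSemiring A] [Module ℂ A]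
    (I : Submodule ℂ A) : Prop :=
  ∃ S : Set A, S.Countable ∧ S ⊆ (I : Set A) ∧ leftIdealGen S = I

/-- Membership in `𝔐∞(A)`: a maximal element of the family of
non-finitely-generated left ideals. -/
def IsMaxNonFG {A : Type*} [NonUnitalNonAssocSemiring A] [Module ℂ A]
    (M : Submodule ℂ A) : Prop :=
  IsLeftIdeal M ∧ ¬ IsFGLeftIdeal M ∧
    ∀ J : Submodule ℂ A, IsLeftIdeal J → ¬ IsFGLeftIdeal J → M ≤ J → J = M

/-- Membership in `𝔑∞(A)`: a maximal element of the family of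
non-countably-generated left ideals. -/
def IsMaxNonCG {A : Type*} [NonUnitalNonAssocSemiring A] [Module ℂ A]
    (M : Submodule ℂ A) : Prop :=
  IsLeftIdeal M ∧ ¬ IsCGLeftIdeal M ∧
    ∀ J : Submodule ℂ A, IsLeftIdeal J → ¬ IsCGLeftIdeal J → M ≤ J → J = M

/-- `M` is a maximal left ideal. -/
def IsMaxLeftIdeal {A : Type*} [NonUnitalNonAssocSemiring A] [Module ℂ A]
    (M : Submodule ℂ A) : Prop :=
  IsLeftIdeal M ∧ M ≠ ⊤ ∧ ∀ J : Submodule ℂ A, IsLeftIdeal J → M < J → J = ⊤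

/-! Let `eₜ` run over the diagonal matrix units of `Mₙ₁(ℂ) ⊕ ⋯ ⊕ Mₙₖ(ℂ)`. Since the left
module generated by `eₜ` is simple, `Kₜ = {a | π a * eₜ = 0}` is a maximal left ideal containing
`L`, hence finitely generated; and `L = ⋂ₜ Kₜ` because `∑ₜ eₜ = 1`. A lift of `eᵤ` lies in every
`Kₜ` with `t ≠ u` while `1` minus it lies in `Kᵤ`, so `Kᵤ` is comaximal with any intersection of
the other `Kₜ`, and the intersection of two comaximal finitely generated left ideals is finitely
generated. -/

section LeftIdeal

variable {A : Type*} [Ring A] [Algebra ℂ A]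

theorem IsLeftIdeal.inf {I J : Submodule ℂ A} (hI : IsLeftIdeal I) (hJ : IsLeftIdeal J) :
    IsLeftIdeal (I ⊓ J) :=
  fun a _ hx => ⟨hI a _ hx.1, hJ a _ hx.2⟩

theorem IsLeftIdeal.eq_top_of_one_mem {I : Submodule ℂ A} (hI : IsLeftIdeal I) (h1 : 1 ∈ I) :
    I = ⊤ :=
  eq_top_iff.2 fun a _ => mul_one a ▸ hI a 1 h1

theorem isLeftIdeal_leftIdealGen (S : Set A) : IsLeftIdeal (leftIdealGen S) := by
  intro a x hx
  rw [leftIdealGen, Submodule.mem_sInf] at hx ⊢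
  exact fun I hI => hI.1 a x (hx I hI)

theorem subset_leftIdealGen (S : Set A) : S ⊆ leftIdealGen S := fun _ hx =>
  Submodule.mem_sInf.2 fun _ hI => hI.2 hx

theorem leftIdealGen_le {S : Set A} {I : Submodule ℂ A} (hI : IsLeftIdeal I) (hS : S ⊆ I) :
    leftIdealGen S ≤ I :=
  sInf_le ⟨hI, hS⟩

theorem leftIdealGen_mono {S T : Set A} (h : S ⊆ T) : leftIdealGen S ≤ leftIdealGen T :=
  leftIdealGen_le (isLeftIdeal_leftIdealGen T) (h.trans (subset_leftIdealGen T))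

theorem isFGLeftIdeal_top : IsFGLeftIdeal (⊤ : Submodule ℂ A) :=
  ⟨{1}, by simp, (isLeftIdeal_leftIdealGen _).eq_top_of_one_mem (subset_leftIdealGen _ (by simp))⟩

theorem mul_mem_leftIdealGen_image_mul {S : Set A} {x : A} (q : A) (hx : x ∈ leftIdealGen S) :
    x * q ∈ leftIdealGen ((· * q) '' S) := by
  suffices leftIdealGen S ≤ (leftIdealGen ((· * q) '' S)).comap (LinearMap.mulRight ℂ q) from
    this hx
  refine leftIdealGen_le (fun a y hy => ?_) fun s hs => ?_
  · simpa [mul_assoc] using isLeftIdeal_leftIdealGen _ a (y * q) hy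
  · exact subset_leftIdealGen _ ⟨s, hs, rfl⟩

/-- Since `x = x * q + x * p`, the products `g * q` and `h * p` of generators `g` of `I` and
`h` of `J` generate `I ⊓ J`. -/
theorem IsFGLeftIdeal.inf {I J : Submodule ℂ A} (hI : IsLeftIdeal I) (hJ : IsLeftIdeal J)
    (hIfg : IsFGLeftIdeal I) (hJfg : IsFGLeftIdeal J) {p q : A} (hp : p ∈ I) (hq : q ∈ J)
    (hpq : p + q = 1) : IsFGLeftIdeal (I ⊓ J) := by
  classical
  obtain ⟨SI, -, rfl⟩ := hIfg
  obtain ⟨SJ, -, rfl⟩ := hJfg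
  have hmul_q : ∀ x, x * q = x - x * p := fun x => by
    rw [eq_sub_iff_add_eq, ← mul_add, add_comm, hpq, mul_one]
  have hmul_p : ∀ x, x * p = x - x * q := fun x => by
    rw [eq_sub_iff_add_eq, ← mul_add, hpq, mul_one]
  set S := SI.image (· * q) ∪ SJ.image (· * p)
  have hS : (S : Set A) ⊆ (leftIdealGen SI ⊓ leftIdealGen SJ : Submodule ℂ A) := by
    simp only [S, Finset.coe_union, Finset.coe_image, Set.union_subset_iff, Set.image_subset_iff]
    refine ⟨fun g hg => ⟨?_, hJ g q hq⟩, fun h hh => ⟨hI h p hp, ?_⟩⟩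
    · change g * q ∈ leftIdealGen SI
      rw [hmul_q]
      exact sub_mem (subset_leftIdealGen _ hg) (hI g p hp)
    · change h * p ∈ leftIdealGen SJ
      rw [hmul_p]
      exact sub_mem (subset_leftIdealGen _ hh) (hJ h q hq)
  refine ⟨S, hS, le_antisymm (leftIdealGen_le (hI.inf hJ) hS) fun x ⟨hxI, hxJ⟩ => ?_⟩
  have hSq : (· * q) '' (SI : Set A) ⊆ S := by simp [S]
  have hSp : (· * p) '' (SJ : Set A) ⊆ S := by simp [S]
  rw [← mul_one x, ← hpq, mul_add, add_comm]
  exact add_mem (leftIdealGen_mono hSq (mul_mem_leftIdealGen_image_mul q hxI))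
    (leftIdealGen_mono hSp (mul_mem_leftIdealGen_image_mul p hxJ))

theorem IsLeftIdeal.iInf {ι : Sort*} {K : ι → Submodule ℂ A} (hK : ∀ t, IsLeftIdeal (K t)) :
    IsLeftIdeal (⨅ t, K t) := fun a x hx =>
  Submodule.mem_iInf _ |>.2 fun t => hK t a x (Submodule.mem_iInf _ |>.1 hx t)

theorem isFGLeftIdeal_biInf {ι : Type*} {K : ι → Submodule ℂ A} (hK : ∀ t, IsLeftIdeal (K t))
    (hfg : ∀ t, IsFGLeftIdeal (K t)) (hsep : ∀ u, ∃ b, 1 - b ∈ K u ∧ ∀ t ≠ u, b ∈ K t)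
    (s : Finset ι) : IsFGLeftIdeal (⨅ t ∈ s, K t) := by
  classical
  induction s using Finset.induction_on with
  | empty => simpa using isFGLeftIdeal_top
  | insert u s hu ih =>
    obtain ⟨b, hbu, hb⟩ := hsep u
    have hbs : b ∈ ⨅ t ∈ s, K t := by
      simp only [Submodule.mem_iInf]
      exact fun t ht => hb t (ne_of_mem_of_not_mem ht hu)
    rw [Finset.iInf_insert]
    exact (hfg u).inf (hK u) (IsLeftIdeal.iInf fun t => IsLeftIdeal.iInf fun _ => hK t) ih hbu hbs
      (sub_add_cancel 1 b)

end LeftIdeal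

section KerMulRight

variable {A B : Type*} [Ring A] [Algebra ℂ A] [Ring B] [Algebra ℂ B]

def kerMulRight (π : A →ₐ[ℂ] B) (e : B) : Submodule ℂ A :=
  LinearMap.ker (LinearMap.mulRight ℂ e ∘ₗ π.toLinearMap)

@[simp]
theorem mem_kerMulRight {π : A →ₐ[ℂ] B} {e : B} {a : A} : a ∈ kerMulRight π e ↔ π a * e = 0 :=
  Iff.rfl

theorem isLeftIdeal_kerMulRight (π : A →ₐ[ℂ] B) (e : B) : IsLeftIdeal (kerMulRight π e) := by
  intro a x hx
  rw [mem_kerMulRight] at hx ⊢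
  rw [map_mul, mul_assoc, hx, mul_zero]

theorem isMaxLeftIdeal_kerMulRight {π : A →ₐ[ℂ] B} (hπ : Function.Surjective π) {e : B}
    (he : e ≠ 0) (hsimple : ∀ y : B, y * e ≠ 0 → ∃ c, c * y * e = e) :
    IsMaxLeftIdeal (kerMulRight π e) := by
  refine ⟨isLeftIdeal_kerMulRight π e, fun htop => he ?_, fun J hJ hlt => ?_⟩
  · simpa using (htop ▸ Submodule.mem_top : (1 : A) ∈ kerMulRight π e)
  obtain ⟨x, hxJ, hx⟩ := SetLike.exists_of_lt hlt
  obtain ⟨c, hc⟩ := hsimple (π x) hx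
  obtain ⟨c, rfl⟩ := hπ c
  have hcx : c * x - 1 ∈ kerMulRight π e := by simp [sub_mul, hc]
  refine hJ.eq_top_of_one_mem ?_
  simpa using sub_mem (hJ c x hxJ) (hlt.le hcx)

theorem mem_iInf_kerMulRight_iff {ι : Type*} [Fintype ι] {π : A →ₐ[ℂ] B} {e : ι → B}
    (he : ∑ t, e t = 1) {a : A} : a ∈ ⨅ t, kerMulRight π (e t) ↔ π a = 0 := by
  simp only [Submodule.mem_iInf, mem_kerMulRight]
  refine ⟨fun h => ?_, fun h t => by simp [h]⟩
  rw [← mul_one (π a), ← he, Finset.mul_sum]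
  exact Finset.sum_eq_zero fun t _ => h t

theorem exists_sub_mem_kerMulRight_of_orthogonal {ι : Type*} {π : A →ₐ[ℂ] B}
    (hπ : Function.Surjective π) {e : ι → B} (hidem : ∀ t, e t * e t = e t)
    (horth : ∀ t u, t ≠ u → e t * e u = 0) (u : ι) :
    ∃ b, 1 - b ∈ kerMulRight π (e u) ∧ ∀ t ≠ u, b ∈ kerMulRight π (e t) := by
  obtain ⟨b, hb⟩ := hπ (e u)
  exact ⟨b, by simp [hb, sub_mul, hidem], fun t ht => by simp [hb, horth u t ht.symm]⟩

end KerMulRight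

section DiagMatrixUnit

variable {ι K : Type*} [DecidableEq ι] [DivisionRing K] {m : ι → Type*} [∀ i, DecidableEq (m i)]

def diagMatrixUnit (t : Σ i, m i) : (i : ι) → Matrix (m i) (m i) K :=
  Pi.single t.1 (Matrix.single t.2 t.2 1)

theorem diagMatrixUnit_ne_zero (t : Σ i, m i) :
    (diagMatrixUnit t : (i : ι) → Matrix (m i) (m i) K) ≠ 0 := by
  intro h
  simpa [diagMatrixUnit] using congr_fun₂ (congr_fun h t.1) t.2 t.2

variable [∀ i, Fintype (m i)]

theorem diagMatrixUnit_mul_self (t : Σ i, m i) :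
    (diagMatrixUnit t : (i : ι) → Matrix (m i) (m i) K) * diagMatrixUnit t = diagMatrixUnit t := by
  rw [diagMatrixUnit, ← Pi.single_mul, Matrix.single_mul_single_same, mul_one]

theorem diagMatrixUnit_mul_of_ne {t u : Σ i, m i} (h : t ≠ u) :
    (diagMatrixUnit t : (i : ι) → Matrix (m i) (m i) K) * diagMatrixUnit u = 0 := by
  obtain ⟨i, j⟩ := t
  obtain ⟨i', j'⟩ := u
  ext l : 1
  rcases eq_or_ne l i with rfl | hl
  · rcases eq_or_ne l i' with rfl | hi
    · have hj : j ≠ j' := fun hj => h (hj ▸ rfl)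
      simp [diagMatrixUnit, hj]
    · simp [diagMatrixUnit, hi]
  · simp [diagMatrixUnit, hl]

theorem sum_diagMatrixUnit [Fintype ι] :
    ∑ t : Σ i, m i, (diagMatrixUnit t : (i : ι) → Matrix (m i) (m i) K) = 1 := by
  calc ∑ t : Σ i, m i, (diagMatrixUnit t : (i : ι) → Matrix (m i) (m i) K)
      = ∑ i, Pi.single i (∑ j : m i, Matrix.single j j (1 : K)) := by
        simp only [Fintype.sum_sigma, diagMatrixUnit, ← AddMonoidHom.single_apply, map_sum]
    _ = 1 := by
        simp only [Matrix.sum_single_one]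
        exact Finset.univ_sum_single 1

theorem exists_mul_mul_diagMatrixUnit {t : Σ i, m i} {y : (i : ι) → Matrix (m i) (m i) K}
    (hy : y * diagMatrixUnit t ≠ 0) : ∃ c, c * y * diagMatrixUnit t = diagMatrixUnit t := by
  obtain ⟨i, j⟩ := t
  obtain ⟨r, hr⟩ : ∃ r, y i r j ≠ 0 := by
    by_contra! h
    refine hy ?_
    rw [diagMatrixUnit, ← Pi.single_mul_right, Pi.single_eq_zero_iff]
    ext a b
    by_cases hb : b = j <;> simp [hb, h]
  refine ⟨Pi.single i (Matrix.single j r (y i r j)⁻¹), ?_⟩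
  rw [diagMatrixUnit, ← Pi.single_mul_left, ← Pi.single_mul, Matrix.single_mul_mul_single,
    inv_mul_cancel₀ hr, one_mul]

end DiagMatrixUnit

theorem fg_of_semisimple_quotient_general {A : Type*} [Ring A] [Algebra ℂ A]
    (L : Submodule ℂ A) (k : ℕ) (n : Fin k → ℕ)
    (π : A →ₐ[ℂ] ((i : Fin k) → Matrix (Fin (n i)) (Fin (n i)) ℂ))
    (hsurj : Function.Surjective π)
    (hker : ∀ a : A, π a = 0 ↔ a ∈ L)
    (hmax : ∀ M : Submodule ℂ A, IsMaxLeftIdeal M → L ≤ M → IsFGLeftIdeal M) :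
    IsFGLeftIdeal L := by
  let e : (Σ i, Fin (n i)) → (i : Fin k) → Matrix (Fin (n i)) (Fin (n i)) ℂ := diagMatrixUnit
  have hK : ∀ t, IsMaxLeftIdeal (kerMulRight π (e t)) := fun t =>
    isMaxLeftIdeal_kerMulRight hsurj (diagMatrixUnit_ne_zero t) fun _ =>
      exists_mul_mul_diagMatrixUnit
  have hLK : ∀ t, L ≤ kerMulRight π (e t) := fun t a ha => by simp [(hker a).2 ha]
  have hL : ⨅ t ∈ Finset.univ, kerMulRight π (e t) = L := by
    ext a
    simpa [hker] using mem_iInf_kerMulRight_iff (π := π) sum_diagMatrixUnit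
  rw [← hL]
  exact isFGLeftIdeal_biInf (fun t => (hK t).1) (fun t => hmax _ (hK t) (hLK t))
    (exists_sub_mem_kerMulRight_of_orthogonal hsurj diagMatrixUnit_mul_self
      fun _ _ => diagMatrixUnit_mul_of_ne) _

/-- Lemma 1.9. Let `A` be a unital algebra and `L` a two-sided ideal
of finite codimension with `A/L` semisimple, i.e. (by Wedderburn's theorem)
`A/L ≅ Mₙ₁(ℂ) ⊕ ⋯ ⊕ Mₙₖ(ℂ)`, encoded by a surjective algebra homomorphism onto a finite
product of matrix algebras with kernel `L`. If every maximal left ideal of `A`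
containing `L` is finitely generated, then `L` is finitely generated as a left ideal. -/
theorem fg_of_semisimple_quotient {A : Type*} [Ring A] [Algebra ℂ A]
    (L : Submodule ℂ A) (k : ℕ) (n : Fin k → ℕ) (hn : ∀ i, 0 < n i)
    (π : A →ₐ[ℂ] ((i : Fin k) → Matrix (Fin (n i)) (Fin (n i)) ℂ))
    (hsurj : Function.Surjective π)
    (hker : ∀ a : A, π a = 0 ↔ a ∈ L)
    (hmax : ∀ M : Submodule ℂ A, IsMaxLeftIdeal M → L ≤ M → IsFGLeftIdeal M) :
    IsFGLeftIdeal L :=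
  fg_of_semisimple_quotient_general L k n π hsurj hker hmax
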